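/- arXiv:1411.5862 — 3 statements merged into one kernel-verified Lean document; each statement's English description precedes it below -/
import Mathlib

section
/- Under the Levi-Civita transformations q = Q L(Q)ᵀ and p = (1/(2|Q|²)) P L(Q)ᵀ with Q ≠ 0, the two-body Hamiltonian term m|p|²/(2μ) − k/|q| transforms into m|P|²/(8μ|Q|²) − k/|Q|², for any constants m, μ > 0 and k. -/
/-- Levi-Civita map Q ↦ Q L(Q)ᵀ. -/
def lc (Q : ℝ × ℝ) : ℝ × ℝ := (Q.1 ^ 2 - Q.2 ^ 2, 2 * Q.1 * Q.2)

/-- Row vector P times L(Q)ᵀ, with L(Q) = [[Q₁, −Q₂],[Q₂, Q₁]]. -/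
def mulLT (P Q : ℝ × ℝ) : ℝ × ℝ := (P.1 * Q.1 - P.2 * Q.2, P.1 * Q.2 + P.2 * Q.1)

/-- Euclidean norm on ℝ². -/
noncomputable def nrm (q : ℝ × ℝ) : ℝ := Real.sqrt (q.1 ^ 2 + q.2 ^ 2)

lemma nrm_sq (q : ℝ × ℝ) : (nrm q) ^ 2 = q.1 ^ 2 + q.2 ^ 2 := by
  have : (0:ℝ) ≤ q.1 ^ 2 + q.2 ^ 2 := by positivity
  simpa [nrm] using Real.sq_sqrt this

/-- transformation of the two-body Hamiltonian term under the
Levi-Civita transformations. -/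
theorem stmt9 (Q P q p : ℝ × ℝ) (hQ : Q ≠ 0) (m μ k : ℝ) (hm : 0 < m) (hμ : 0 < μ)
    (hq : q = lc Q) (hp : p = (1 / (2 * (nrm Q) ^ 2)) • mulLT P Q) :
    m * (nrm p) ^ 2 / (2 * μ) - k / nrm q
      = m * (nrm P) ^ 2 / (8 * μ * (nrm Q) ^ 2) - k / (nrm Q) ^ 2 := by
  have hQ1 : Q.1 ≠ 0 ∨ Q.2 ≠ 0 := by
    by_contra h
    push_neg at h
    exact hQ (Prod.ext h.1 h.2)
  have hs : (0:ℝ) < Q.1 ^ 2 + Q.2 ^ 2 := by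
    rcases hQ1 with h | h <;> positivity
  have hN : (nrm Q) ^ 2 = Q.1 ^ 2 + Q.2 ^ 2 := nrm_sq Q
  have hnq : nrm q = Q.1 ^ 2 + Q.2 ^ 2 := by
    rw [hq]
    have : ((Q.1 ^ 2 - Q.2 ^ 2) ^ 2 + (2 * Q.1 * Q.2) ^ 2) = (Q.1 ^ 2 + Q.2 ^ 2) ^ 2 := by ring
    simp only [nrm, lc]
    rw [this, Real.sqrt_sq hs.le]
  have hnp : (nrm p) ^ 2 = (nrm P) ^ 2 / (4 * (Q.1 ^ 2 + Q.2 ^ 2)) := by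
    rw [hp, nrm_sq, nrm_sq P, hN]
    simp only [mulLT, Prod.smul_fst, Prod.smul_snd, smul_eq_mul]
    field_simp
    ring
  rw [hnp, hnq, hN]
  have h4 : (4 : ℝ) * (Q.1 ^ 2 + Q.2 ^ 2) ≠ 0 := by positivity
  field_simp
  ring
end

section
/- Consider the discrete-time regularized two-body step: (Q^{(n+1)} − Q^{(n)})/Δt = c₁ ((|Q^{(n+1)}|² + |Q^{(n)}|²)/(|Q^{(n+1)}|²|Q^{(n)}|²)) P^{(n+1/2)} and (P^{(n+1)} − P^{(n)})/Δt = (1/(|Q^{(n+1)}|²|Q^{(n)}|²)) (c₁(|P^{(n+1)}|² + |P^{(n)}|²) − c₂) Q^{(n+1/2)}, where (·)^{(n+1/2)} = ((·)^{(n+1)} + (·)^{(n)})/2. Then the discrete energy h(P,Q) = 2c₁|P|²/|Q|² − c₂/|Q|² is exactly conserved: h(P^{(n+1)}, Q^{(n+1)}) = h(P^{(n)}, Q^{(n)}). -/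
/-- Squared Euclidean norm on ℝ². -/
def norm2 (q : ℝ × ℝ) : ℝ := q.1 ^ 2 + q.2 ^ 2

/-- exact conservation of the discrete energy
h(P,Q) = 2c₁|P|²/|Q|² − c₂/|Q|² by the discrete-time regularized two-body step. -/
theorem stmt13 (c1 c2 dt : ℝ) (hdt : 0 < dt)
    (Q0 Q1 P0 P1 : ℝ × ℝ) (hQ0 : Q0 ≠ 0) (hQ1 : Q1 ≠ 0)
    (heq1 : dt⁻¹ • (Q1 - Q0)
      = (c1 * ((norm2 Q1 + norm2 Q0) / (norm2 Q1 * norm2 Q0)))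
          • ((1 / 2 : ℝ) • (P1 + P0)))
    (heq2 : dt⁻¹ • (P1 - P0)
      = ((norm2 Q1 * norm2 Q0)⁻¹ * (c1 * (norm2 P1 + norm2 P0) - c2))
          • ((1 / 2 : ℝ) • (Q1 + Q0))) :
    2 * c1 * norm2 P1 / norm2 Q1 - c2 / norm2 Q1
      = 2 * c1 * norm2 P0 / norm2 Q0 - c2 / norm2 Q0 := by
  have hq0 : norm2 Q0 ≠ 0 := by
    intro h
    apply hQ0
    have h' : Q0.1 ^ 2 + Q0.2 ^ 2 = 0 := h
    have h1 : Q0.1 = 0 := by nlinarith [sq_nonneg Q0.1, sq_nonneg Q0.2]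
    have h2 : Q0.2 = 0 := by nlinarith [sq_nonneg Q0.1, sq_nonneg Q0.2]
    exact Prod.ext h1 h2
  have hq1 : norm2 Q1 ≠ 0 := by
    intro h
    apply hQ1
    have h' : Q1.1 ^ 2 + Q1.2 ^ 2 = 0 := h
    have h1 : Q1.1 = 0 := by nlinarith [sq_nonneg Q1.1, sq_nonneg Q1.2]
    have h2 : Q1.2 = 0 := by nlinarith [sq_nonneg Q1.1, sq_nonneg Q1.2]
    exact Prod.ext h1 h2
  have e1a := congrArg Prod.fst heq1
  have e1b := congrArg Prod.snd heq1
  have e2a := congrArg Prod.fst heq2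
  have e2b := congrArg Prod.snd heq2
  simp only [Prod.smul_fst, Prod.smul_snd, Prod.fst_sub, Prod.snd_sub, Prod.fst_add,
    Prod.snd_add, smul_eq_mul] at e1a e1b e2a e2b
  set q0 := norm2 Q0
  set q1 := norm2 Q1
  set p0 := norm2 P0
  set p1 := norm2 P1
  have hA : dt⁻¹ * ((Q1.1 - Q0.1) * (P1.1 - P0.1) + (Q1.2 - Q0.2) * (P1.2 - P0.2))
      = c1 * ((q1 + q0) / (q1 * q0)) * ((1 / 2) * (p1 - p0)) := by
    have hp1 : p1 = P1.1 ^ 2 + P1.2 ^ 2 := rfl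
    have hp0 : p0 = P0.1 ^ 2 + P0.2 ^ 2 := rfl
    rw [hp1, hp0]
    linear_combination (P1.1 - P0.1) * e1a + (P1.2 - P0.2) * e1b
  have hB : dt⁻¹ * ((Q1.1 - Q0.1) * (P1.1 - P0.1) + (Q1.2 - Q0.2) * (P1.2 - P0.2))
      = (q1 * q0)⁻¹ * (c1 * (p1 + p0) - c2) * ((1 / 2) * (q1 - q0)) := by
    have hq1' : q1 = Q1.1 ^ 2 + Q1.2 ^ 2 := rfl
    have hq0' : q0 = Q0.1 ^ 2 + Q0.2 ^ 2 := rfl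
    nth_rewrite 2 [hq1']
    nth_rewrite 2 [hq0']
    linear_combination (Q1.1 - Q0.1) * e2a + (Q1.2 - Q0.2) * e2b
  have hkey := hA.symm.trans hB
  field_simp at hkey ⊢
  nlinarith [hkey]
end

section
/- The set Q = {Q ∈ (ℝ²)^{N(N−1)/2} : Φ_{1jk}(Q) = 0 for all 2 ≤ j < k ≤ N}, where Φ_{1jk}(Q) = Q_{1j}L(Q_{1j})ᵀ + Q_{jk}L(Q_{jk})ᵀ − Q_{1k}L(Q_{1k})ᵀ, is parametrized by the chain components: the map sending (Q_{k,k+1})_{k=1}^{N-1} with prescribed sign conventions to the full tuple via Q̃_{ij} of equation (23) is a right inverse of the projection onto chain components, provided all the sums s_{ij} are nonzero. -/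
/-- The explicit cancellation-avoiding square root for the Levi-Civita map
(equation (23)/(45) of the paper, with the prescribed sign conventions). -/
noncomputable def lcSqrt (s : ℝ × ℝ) : ℝ × ℝ :=
  if 0 ≤ s.1 then
    (Real.sqrt ((nrm s + s.1) / 2), s.2 / Real.sqrt (2 * (nrm s + s.1)))
  else
    (s.2 / Real.sqrt (2 * (nrm s - s.1)), Real.sqrt ((nrm s - s.1) / 2))

/-!
`lcSqrt` is a right inverse of `lc` away from `0`, so `lc (Q i j) = s i j` for every
`i < j` (for chain pairs this holds because `s k (k+1) = lc (Qc k)`). The constraints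
then reduce to the telescoping identity `s 1 j + s j k = s 1 k`.
-/

lemma lc_swap (p : ℝ × ℝ) : lc p.swap = (-(lc p).1, (lc p).2) := by
  simp only [lc, Prod.fst_swap, Prod.snd_swap, Prod.mk.injEq]
  constructor <;> ring

lemma lc_halfAngle {c d n : ℝ} (hn : n ^ 2 = c ^ 2 + d ^ 2) (hpos : 0 < n + c) :
    lc (√((n + c) / 2), d / √(2 * (n + c))) = (c, d) := by
  set r := √((n + c) / 2)
  have hr : 0 < r := Real.sqrt_pos.mpr (by linarith)
  have hr_sq : r ^ 2 = (n + c) / 2 := Real.sq_sqrt (by linarith)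
  have h_two_r : √(2 * (n + c)) = 2 * r := by
    rw [show 2 * (n + c) = 2 ^ 2 * ((n + c) / 2) by ring, Real.sqrt_mul (by positivity),
      Real.sqrt_sq zero_le_two]
  simp only [lc, h_two_r, Prod.mk.injEq]
  constructor
  · field_simp
    linear_combination (4 * r ^ 2 + 2 * n - 2 * c) * hr_sq + hn
  · field_simp

lemma nrm_sq_s17 (s : ℝ × ℝ) : nrm s ^ 2 = s.1 ^ 2 + s.2 ^ 2 :=
  Real.sq_sqrt (by positivity)

lemma nrm_pos {s : ℝ × ℝ} (hs : s ≠ 0) : 0 < nrm s := by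
  refine Real.sqrt_pos.mpr ?_
  rcases s with ⟨a, b⟩
  have hab : a ≠ 0 ∨ b ≠ 0 := by
    by_contra! h
    exact hs (by simp [h.1, h.2])
  rcases hab with h | h <;> positivity

/- The first branch of `lcSqrt` is the half-angle formula for the square root of
`s.1 + i s.2`; the second is the first one applied to `-s̄` followed by a swap of the
coordinates, which negates the real part of `lc`. -/
lemma lc_lcSqrt {s : ℝ × ℝ} (hs : s ≠ 0) : lc (lcSqrt s) = s := by
  have hn := nrm_pos hs
  by_cases h : 0 ≤ s.1
  · rw [lcSqrt, if_pos h, lc_halfAngle (nrm_sq_s17 s) (by linarith)]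
  · have hsq : nrm s ^ 2 = (-s.1) ^ 2 + s.2 ^ 2 := by rw [nrm_sq_s17, neg_sq]
    have h_swap := lc_swap (√((nrm s + -s.1) / 2), s.2 / √(2 * (nrm s + -s.1)))
    rw [lc_halfAngle hsq (by linarith)] at h_swap
    simpa [lcSqrt, h, ← sub_eq_add_neg] using h_swap

theorem stmt17_general (N : ℕ) (Qc : ℕ → ℝ × ℝ)
    (hs0 : ∀ i j, 1 ≤ i → i + 2 ≤ j → j ≤ N →
      (∑ k ∈ Finset.Ico i j, lc (Qc k)) ≠ 0)
    (Q : ℕ → ℕ → ℝ × ℝ)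
    (hQchain : ∀ k, 1 ≤ k → k ≤ N - 1 → Q k (k + 1) = Qc k)
    (hQnon : ∀ i j, 1 ≤ i → i + 2 ≤ j → j ≤ N →
      Q i j = lcSqrt (∑ k ∈ Finset.Ico i j, lc (Qc k))) :
    (∀ k, 1 ≤ k → k ≤ N - 1 → Q k (k + 1) = Qc k) ∧
    (∀ j k, 2 ≤ j → j < k → k ≤ N →
      lc (Q 1 j) + lc (Q j k) - lc (Q 1 k) = 0) := by
  have lc_Q : ∀ i j, 1 ≤ i → i < j → j ≤ N →
      lc (Q i j) = ∑ k ∈ Finset.Ico i j, lc (Qc k) := by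
    intro i j hi hij hjN
    rcases Nat.lt_or_ge (i + 1) j with hfar | hnext
    · rw [hQnon i j hi hfar hjN, lc_lcSqrt (hs0 i j hi hfar hjN)]
    · obtain rfl : j = i + 1 := by omega
      rw [hQchain i hi (by omega), Finset.sum_Ico_succ_top le_rfl, Finset.Ico_self,
        Finset.sum_empty, zero_add]
  refine ⟨hQchain, fun j k hj hjk hkN => ?_⟩
  rw [lc_Q 1 j (by omega) (by omega) (by omega), lc_Q j k (by omega) hjk hkN,
    lc_Q 1 k (by omega) (by omega) hkN, Finset.sum_Ico_consecutive _ (by omega) hjk.le,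
    sub_self]

/-- the constraint set 𝒬 is parametrized by the chain components:
the map sending the chain components (Qc k)_{k=1}^{N-1} to the full tuple via
Q̃_{ij} = lcSqrt (s_{ij}) is a right inverse of the projection onto the chain
components, and its image satisfies all constraints Φ_{1jk} = 0, provided all
sums s_{ij} are nonzero. -/
theorem stmt17 (N : ℕ) (hN : 3 ≤ N) (Qc : ℕ → ℝ × ℝ)
    (hs0 : ∀ i j, 1 ≤ i → i + 2 ≤ j → j ≤ N →
      (∑ k ∈ Finset.Ico i j, lc (Qc k)) ≠ 0)
    (Q : ℕ → ℕ → ℝ × ℝ)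
    (hQchain : ∀ k, 1 ≤ k → k ≤ N - 1 → Q k (k + 1) = Qc k)
    (hQnon : ∀ i j, 1 ≤ i → i + 2 ≤ j → j ≤ N →
      Q i j = lcSqrt (∑ k ∈ Finset.Ico i j, lc (Qc k))) :
    (∀ k, 1 ≤ k → k ≤ N - 1 → Q k (k + 1) = Qc k) ∧
    (∀ j k, 2 ≤ j → j < k → k ≤ N →
      lc (Q 1 j) + lc (Q j k) - lc (Q 1 k) = 0) :=
  stmt17_general N Qc hs0 Q hQchain hQnon
end
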